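/- Let Λ and Λ' be finite index sets and a : Λ → ℝ, a' : Λ' → ℝ. If |Λ| ≠ |Λ'|, then d_I(⊕_{λ∈Λ} χ_{[a(λ), ∞)}, ⊕_{λ'∈Λ'} χ_{[a'(λ'), ∞)}) = ∞. If |Λ| = |Λ'|, then d_I(⊕_{λ∈Λ} χ_{[a(λ), ∞)}, ⊕_{λ'∈Λ'} χ_{[a'(λ'), ∞)}) equals the minimum over all bijections f : Λ → Λ' of max_{λ∈Λ} |a(λ) − a'(f(λ))|. (This is the algebraic content of the computation of the cohomology interleaving distance between total spaces of fibrations over BS¹ whose Leray–Serre spectral sequences collapse at the E₂-term.) -/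

import Mathlib

open scoped ENNReal

/-- A persistence module: a functor from the poset `(ℝ, ≤)` to `K`-vector spaces,
presented by its structure maps. -/
structure PersistenceModule (K : Type) [Field K] where
  X : ℝ → Type
  [addCommGroupX : ∀ a, AddCommGroup (X a)]
  [moduleX : ∀ a, Module K (X a)]
  map : ∀ {a b : ℝ}, a ≤ b → (X a →ₗ[K] X b)
  map_refl : ∀ a : ℝ, map (le_refl a) = LinearMap.id
  map_trans : ∀ {a b c : ℝ} (hab : a ≤ b) (hbc : b ≤ c),
      map (hab.trans hbc) = (map hbc).comp (map hab)

attribute [instance] PersistenceModule.addCommGroupX PersistenceModule.moduleX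

/-- The pair `(φ, ψ)` is an `ε`-interleaving between the persistence modules `F` and `G`:
both are natural transformations (to the `ε`-shifts) and the two triangle identities hold. -/
structure IsInterleaving (K : Type) [Field K] (ε : ℝ) (F G : PersistenceModule K)
    (φ : ∀ a : ℝ, F.X a →ₗ[K] G.X (a + ε))
    (ψ : ∀ a : ℝ, G.X a →ₗ[K] F.X (a + ε)) : Prop where
  nonneg : 0 ≤ ε
  φ_nat : ∀ {a b : ℝ} (hab : a ≤ b),
      (φ b).comp (F.map hab) = (G.map (by linarith : a + ε ≤ b + ε)).comp (φ a)
  ψ_nat : ∀ {a b : ℝ} (hab : a ≤ b),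
      (ψ b).comp (G.map hab) = (F.map (by linarith : a + ε ≤ b + ε)).comp (ψ a)
  tri₁ : ∀ (a : ℝ) (h : a ≤ a + ε + ε), (ψ (a + ε)).comp (φ a) = F.map h
  tri₂ : ∀ (a : ℝ) (h : a ≤ a + ε + ε), (φ (a + ε)).comp (ψ a) = G.map h

/-- `F` and `G` are `ε`-interleaved. -/
def Interleaved (K : Type) [Field K] (ε : ℝ) (F G : PersistenceModule K) : Prop :=
  ∃ φ ψ, IsInterleaving K ε F G φ ψ

/-- The interleaving distance `d_I(F, G) ∈ [0, ∞]`: the infimum of the set of `ε ≥ 0` such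
that `F` and `G` are `ε`-interleaved (`∞` when this set is empty). -/
noncomputable def interleavingDist (K : Type) [Field K] (F G : PersistenceModule K) : ℝ≥0∞ :=
  sInf {x : ℝ≥0∞ | ∃ ε : ℝ, 0 ≤ ε ∧ Interleaved K ε F G ∧ x = ENNReal.ofReal ε}

attribute [local instance] Classical.propDecidable

lemma subsingleton_ite_bot (K : Type) [Field K] {J : Set ℝ} {a : ℝ} (ha : a ∉ J) :
    Subsingleton ↥(if a ∈ J then (⊤ : Submodule K K) else ⊥) := by
  rw [if_neg ha]
  infer_instance

/-- The interval module `χ_J` associated with an interval `J ⊆ ℝ`: the vector space `K`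
at points of `J` (realized as `⊤ ≤ K`), and `0` elsewhere, with identity/zero structure maps. -/
noncomputable def intervalModule (K : Type) [Field K] (J : Set ℝ) (hJ : J.OrdConnected) :
    PersistenceModule K where
  X a := ↥(if a ∈ J then (⊤ : Submodule K K) else ⊥)
  map {a b} hab :=
    if h : a ∈ J ∧ b ∈ J then
      Submodule.inclusion (le_of_eq (by rw [if_pos h.1, if_pos h.2]))
    else 0
  map_refl a := by
    try dsimp only
    by_cases ha : a ∈ J
    · rw [dif_pos ⟨ha, ha⟩]
      rfl
    · rw [dif_neg (fun h => ha h.1)]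
      haveI := subsingleton_ite_bot K (J := J) ha
      exact LinearMap.ext fun x => Subsingleton.elim _ _
  map_trans := by
    intro a b c hab hbc
    try dsimp only
    by_cases hac : a ∈ J ∧ c ∈ J
    · have hb : b ∈ J := hJ.out hac.1 hac.2 ⟨hab, hbc⟩
      rw [dif_pos hac, dif_pos ⟨hb, hac.2⟩, dif_pos ⟨hac.1, hb⟩]
      rfl
    · rw [dif_neg hac]
      rcases not_and_or.mp hac with ha | hc
      · haveI := subsingleton_ite_bot K (J := J) ha
        exact LinearMap.ext fun x => by
          rw [Subsingleton.elim x 0]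
          simp
      · haveI := subsingleton_ite_bot K (J := J) hc
        exact LinearMap.ext fun x => Subsingleton.elim _ _

/-- The interval module `χ_{[a,b)}`. -/
noncomputable def chiIco (K : Type) [Field K] (a b : ℝ) : PersistenceModule K :=
  intervalModule K (Set.Ico a b) Set.ordConnected_Ico

/-- The interval module `χ_{[a,∞)}`. -/
noncomputable def chiIci (K : Type) [Field K] (a : ℝ) : PersistenceModule K :=
  intervalModule K (Set.Ici a) Set.ordConnected_Ici

/-- The zero persistence module `χ_∅`. -/
noncomputable def zeroPM (K : Type) [Field K] : PersistenceModule K :=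
  intervalModule K (∅ : Set ℝ) Set.ordConnected_empty

/-- The pointwise direct sum of a family of persistence modules. -/
noncomputable def dsum (K : Type) [Field K] {ι : Type} (F : ι → PersistenceModule K) :
    PersistenceModule K where
  X a := Π₀ i, (F i).X a
  map {a b} hab := DFinsupp.mapRange.linearMap fun i => (F i).map hab
  map_refl a := by
    try dsimp only
    have : (fun i => (F i).map (le_refl a))
        = fun i => (LinearMap.id : (F i).X a →ₗ[K] (F i).X a) :=
      funext fun i => (F i).map_refl a
    rw [this]
    exact DFinsupp.mapRange.linearMap_id
  map_trans {a b c} hab hbc := by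
    try dsimp only
    have : (fun i => (F i).map (hab.trans hbc)) =
        fun i => ((F i).map hbc).comp ((F i).map hab) :=
      funext fun i => (F i).map_trans hab hbc
    rw [this]
    exact DFinsupp.mapRange.linearMap_comp _ _


section Aux

variable {K : Type} [Field K]

lemma chiIci_val_zero {c t : ℝ} (ht : t ∉ Set.Ici c) (x : (chiIci K c).X t) :
    (x.1 : K) = 0 := by
  have hx := x.2
  simp only [ht, if_false] at hx
  exact (Submodule.mem_bot K).mp hx

lemma chiIci_map_val (c : ℝ) {s t : ℝ} (hst : s ≤ t) (x : (chiIci K c).X s) :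
    (((chiIci K c).map hst x).1 : K) = x.1 := by
  by_cases hs : s ∈ Set.Ici c
  · have ht : t ∈ Set.Ici c := le_trans hs hst
    show ((if h : s ∈ Set.Ici c ∧ t ∈ Set.Ici c then
      Submodule.inclusion (le_of_eq (by rw [if_pos h.1, if_pos h.2])) else 0) x).1 = x.1
    rw [dif_pos ⟨hs, ht⟩]
    rfl
  · rw [chiIci_val_zero hs x]
    show ((if h : s ∈ Set.Ici c ∧ t ∈ Set.Ici c then
      Submodule.inclusion (le_of_eq (by rw [if_pos h.1, if_pos h.2])) else 0) x).1 = 0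
    rw [dif_neg (fun h => hs h.1)]
    rfl

/-- Inclusion-type morphism between shifted interval modules. -/
noncomputable def iciIncl (c c' ε : ℝ) (h : c' ≤ c + ε) (t : ℝ) :
    (chiIci K c).X t →ₗ[K] (chiIci K c').X (t + ε) :=
  Submodule.inclusion (by
    by_cases ht : t ∈ Set.Ici c
    · rw [if_pos ht, if_pos (show t + ε ∈ Set.Ici c' from
        le_trans h ((add_le_add_iff_right ε).mpr ht))]
    · rw [if_neg ht]
      exact bot_le)

lemma iciIncl_val (c c' ε : ℝ) (h : c' ≤ c + ε) (t : ℝ) (x : (chiIci K c).X t) :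
    ((iciIncl c c' ε h t x : (chiIci K c').X (t + ε)).1 : K) = x.1 := rfl

end Aux
section Phi

variable {K : Type} [Field K] {Λ Λ' : Type} [Fintype Λ] [Fintype Λ']

set_option linter.unusedSectionVars false

/-- The morphism between direct sums of interval modules induced by `f`. -/
noncomputable def dsumPhi (a : Λ → ℝ) (a' : Λ' → ℝ) (f : Λ → Λ') (ε : ℝ)
    (hf : ∀ i, a' (f i) ≤ a i + ε) (t : ℝ) :
    (dsum K fun i => chiIci K (a i)).X t →ₗ[K] (dsum K fun j => chiIci K (a' j)).X (t + ε) :=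
  DFinsupp.lsum ℕ fun i =>
    (DFinsupp.lsingle (f i)).comp (iciIncl (a i) (a' (f i)) ε (hf i) t)

lemma single_eq_single_of_val (b : Λ → ℝ) {i j : Λ} (h : i = j) {t : ℝ}
    (y : (chiIci K (b i)).X t) (z : (chiIci K (b j)).X t) (hyz : (y.1 : K) = z.1) :
    (DFinsupp.single i y : Π₀ k, (chiIci K (b k)).X t) = DFinsupp.single j z := by
  subst h
  congr 1
  exact Subtype.ext hyz

lemma isInterleaving_of_equiv (a : Λ → ℝ) (a' : Λ' → ℝ) (f : Λ ≃ Λ') (ε : ℝ)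
    (hε : 0 ≤ ε) (h : ∀ i, |a i - a' (f i)| ≤ ε) :
    Interleaved K ε (dsum K fun i => chiIci K (a i)) (dsum K fun j => chiIci K (a' j)) := by
  have hf : ∀ i, a' (f i) ≤ a i + ε := fun i => by
    have := (abs_le.mp (h i)).1; linarith
  have hg : ∀ j, a (f.symm j) ≤ a' j + ε := fun j => by
    have h2 := (abs_le.mp (h (f.symm j))).2
    rw [f.apply_symm_apply] at h2
    linarith
  refine ⟨fun t => dsumPhi a a' f ε hf t, fun t => dsumPhi a' a f.symm ε hg t, hε, ?_, ?_, ?_, ?_⟩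
  · intro s t hst
    refine DFinsupp.lhom_ext' fun i => LinearMap.ext fun x => ?_
    simp only [LinearMap.comp_apply, DFinsupp.lsingle_apply, dsumPhi, dsum,
      DFinsupp.lsum_single, DFinsupp.mapRange.linearMap_apply, DFinsupp.mapRange_single,
      LinearMap.coe_comp, Function.comp_apply]
    erw [LinearMap.comp_apply, LinearMap.comp_apply, LinearMap.comp_apply, LinearMap.comp_apply, DFinsupp.lsingle_apply, DFinsupp.mapRange.linearMap_apply, DFinsupp.mapRange_single, DFinsupp.lsum_single, LinearMap.comp_apply, DFinsupp.lsingle_apply, DFinsupp.lsum_single, LinearMap.comp_apply, DFinsupp.lsingle_apply, DFinsupp.mapRange.linearMap_apply, DFinsupp.mapRange_single]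
    exact single_eq_single_of_val a' rfl _ _
      (by rw [iciIncl_val, chiIci_map_val, chiIci_map_val, iciIncl_val])
  · intro s t hst
    refine DFinsupp.lhom_ext' fun j => LinearMap.ext fun x => ?_
    simp only [LinearMap.comp_apply, DFinsupp.lsingle_apply, dsumPhi, dsum,
      DFinsupp.lsum_single, DFinsupp.mapRange.linearMap_apply, DFinsupp.mapRange_single,
      LinearMap.coe_comp, Function.comp_apply]
    erw [LinearMap.comp_apply, LinearMap.comp_apply, LinearMap.comp_apply, LinearMap.comp_apply, DFinsupp.lsingle_apply, DFinsupp.mapRange.linearMap_apply, DFinsupp.mapRange_single, DFinsupp.lsum_single, LinearMap.comp_apply, DFinsupp.lsingle_apply, DFinsupp.lsum_single, LinearMap.comp_apply, DFinsupp.lsingle_apply, DFinsupp.mapRange.linearMap_apply, DFinsupp.mapRange_single]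
    exact single_eq_single_of_val a rfl _ _
      (by rw [iciIncl_val, chiIci_map_val, chiIci_map_val, iciIncl_val])
  · intro t ht
    refine DFinsupp.lhom_ext' fun i => LinearMap.ext fun x => ?_
    simp only [LinearMap.comp_apply, DFinsupp.lsingle_apply, dsumPhi, dsum,
      DFinsupp.lsum_single, DFinsupp.mapRange.linearMap_apply, DFinsupp.mapRange_single,
      LinearMap.coe_comp, Function.comp_apply]
    erw [LinearMap.comp_apply, LinearMap.comp_apply, DFinsupp.lsingle_apply, DFinsupp.lsum_single, LinearMap.comp_apply, DFinsupp.lsingle_apply, DFinsupp.lsum_single, LinearMap.comp_apply, DFinsupp.lsingle_apply, DFinsupp.mapRange.linearMap_apply, DFinsupp.mapRange_single]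
    exact single_eq_single_of_val a (f.symm_apply_apply i) _ _
      (by rw [iciIncl_val, iciIncl_val, chiIci_map_val])
  · intro t ht
    refine DFinsupp.lhom_ext' fun j => LinearMap.ext fun x => ?_
    simp only [LinearMap.comp_apply, DFinsupp.lsingle_apply, dsumPhi, dsum,
      DFinsupp.lsum_single, DFinsupp.mapRange.linearMap_apply, DFinsupp.mapRange_single,
      LinearMap.coe_comp, Function.comp_apply]
    erw [LinearMap.comp_apply, LinearMap.comp_apply, DFinsupp.lsingle_apply, DFinsupp.lsum_single, LinearMap.comp_apply, DFinsupp.lsingle_apply, DFinsupp.lsum_single, LinearMap.comp_apply, DFinsupp.lsingle_apply, DFinsupp.mapRange.linearMap_apply, DFinsupp.mapRange_single]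
    exact single_eq_single_of_val a' (f.apply_symm_apply j) _ _
      (by rw [iciIncl_val, iciIncl_val, chiIci_map_val])

end Phi
section Count

variable {K : Type} [Field K] {Λ Λ' : Type} [Fintype Λ] [Fintype Λ']

set_option linter.unusedSectionVars false

instance chiIci_finiteDimensional (c t : ℝ) : FiniteDimensional K ((chiIci K c).X t) :=
  inferInstanceAs (FiniteDimensional K ↥(if t ∈ Set.Ici c then (⊤ : Submodule K K) else ⊥))

noncomputable def dfinsuppLequivPi (M : Λ → Type) [∀ i, AddCommGroup (M i)]
    [∀ i, Module K (M i)] : (Π₀ i, M i) ≃ₗ[K] ∀ i, M i :=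
  { DFinsupp.equivFunOnFintype with
    map_add' := fun x y => funext fun i => by simp
    map_smul' := fun c x => funext fun i => by simp }

instance dsum_X_finiteDimensional (a : Λ → ℝ) (t : ℝ) :
    FiniteDimensional K ((dsum K fun i => chiIci K (a i)).X t) :=
  Module.Finite.equiv (dfinsuppLequivPi (fun i => (chiIci K (a i)).X t)).symm

lemma finrank_chiIci (c t : ℝ) :
    Module.finrank K ((chiIci K c).X t) = if c ≤ t then 1 else 0 := by
  show Module.finrank K ↥(if t ∈ Set.Ici c then (⊤ : Submodule K K) else ⊥) = _
  by_cases h : c ≤ t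
  · rw [if_pos h, if_pos (show t ∈ Set.Ici c from h), finrank_top, Module.finrank_self]
  · rw [if_neg h, if_neg (show t ∉ Set.Ici c from h), finrank_bot]

lemma finrank_dsum_X (a : Λ → ℝ) (t : ℝ) :
    Module.finrank K ((dsum K fun i => chiIci K (a i)).X t)
      = (Finset.univ.filter fun i => a i ≤ t).card := by
  have e : ((dsum K fun i => chiIci K (a i)).X t) ≃ₗ[K] ∀ i, (chiIci K (a i)).X t :=
    dfinsuppLequivPi _
  rw [e.finrank_eq, Module.finrank_pi_fintype, Finset.card_filter]
  exact Finset.sum_congr rfl fun i _ => finrank_chiIci (a i) t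

lemma dsum_map_injective (a : Λ → ℝ) {s t : ℝ} (hst : s ≤ t) :
    Function.Injective ((dsum K fun i => chiIci K (a i)).map hst) := by
  let m : (Π₀ k, (chiIci K (a k)).X s) →ₗ[K] Π₀ k, (chiIci K (a k)).X t :=
    ((dsum K fun i => chiIci K (a i)).map hst)
  have key : Function.Injective m := by
    have h1 : ∀ (z : Π₀ k, (chiIci K (a k)).X s) (i : Λ),
        (((m z) i).1 : K) = (z i).1 := by
      intro z i
      have h2 : (m z) i = (chiIci K (a i)).map hst (z i) :=
        DFinsupp.mapRange_apply _ (fun k => map_zero _) z i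
      rw [h2, chiIci_map_val]
    intro x y hxy
    ext i
    refine Subtype.ext ?_
    rw [← h1 x i, ← h1 y i, hxy]
  exact key

lemma count_le_of_injective (a : Λ → ℝ) (a' : Λ' → ℝ) {s t : ℝ}
    (g : (dsum K fun i => chiIci K (a i)).X s →ₗ[K] (dsum K fun j => chiIci K (a' j)).X t)
    (hg : Function.Injective g) :
    (Finset.univ.filter fun i => a i ≤ s).card
      ≤ (Finset.univ.filter fun j => a' j ≤ t).card := by
  rw [← finrank_dsum_X (K := K) a s, ← finrank_dsum_X (K := K) a' t]
  exact LinearMap.finrank_le_finrank_of_injective hg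

lemma count_le_of_interleaved (a : Λ → ℝ) (a' : Λ' → ℝ) {ε : ℝ}
    (h : Interleaved K ε (dsum K fun i => chiIci K (a i))
      (dsum K fun j => chiIci K (a' j))) (t : ℝ) :
    (Finset.univ.filter fun i => a i ≤ t).card
      ≤ (Finset.univ.filter fun j => a' j ≤ t + ε).card := by
  obtain ⟨φ, ψ, hI⟩ := h
  have hε := hI.nonneg
  have htri := hI.tri₁ t (by linarith)
  have hcomp : Function.Injective ((ψ (t + ε)).comp (φ t)) := by
    rw [htri]
    exact dsum_map_injective a (by linarith)
  exact count_le_of_injective a a' (φ t) (Function.Injective.of_comp hcomp)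

lemma interleaved_symm {F G : PersistenceModule K} {ε : ℝ}
    (h : Interleaved K ε F G) : Interleaved K ε G F := by
  obtain ⟨φ, ψ, hI⟩ := h
  exact ⟨ψ, φ, hI.nonneg, hI.ψ_nat, hI.φ_nat, hI.tri₂, hI.tri₁⟩

end Count
section Comb

lemma mem_of_card_lower {n : ℕ} (S : Finset (Fin n)) (k : Fin n)
    (hS : ∀ j j' : Fin n, j ≤ j' → j' ∈ S → j ∈ S) (hcard : (k : ℕ) + 1 ≤ S.card) :
    k ∈ S := by
  by_contra hk
  have hsub : S ⊆ Finset.Iio k := by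
    intro j hj
    rw [Finset.mem_Iio]
    by_contra hjk
    exact hk (hS k j (not_lt.mp hjk) hj)
  have hle := Finset.card_le_card hsub
  rw [Fin.card_Iio] at hle
  omega

lemma sorted_le {n : ℕ} (b b' : Fin n → ℝ) (hb : Monotone b) (hb' : Monotone b') (ε : ℝ)
    (h : ∀ t : ℝ, (Finset.univ.filter fun k => b k ≤ t).card
      ≤ (Finset.univ.filter fun k => b' k ≤ t + ε).card) (k : Fin n) :
    b' k ≤ b k + ε := by
  have h1 : (k : ℕ) + 1 ≤ (Finset.univ.filter fun j => b j ≤ b k).card := by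
    have hsub : Finset.Iic k ⊆ Finset.univ.filter fun j => b j ≤ b k := fun j hj =>
      Finset.mem_filter.mpr ⟨Finset.mem_univ _, hb (Finset.mem_Iic.mp hj)⟩
    have := Finset.card_le_card hsub
    rwa [Fin.card_Iic] at this
  have h2 := (h (b k)).trans' h1
  have h3 : k ∈ Finset.univ.filter fun j => b' j ≤ b k + ε := by
    refine mem_of_card_lower _ _ (fun j j' hjj' hj' => ?_) h2
    have := (Finset.mem_filter.mp hj').2
    exact Finset.mem_filter.mpr ⟨Finset.mem_univ _, (hb' hjj').trans this⟩
  exact (Finset.mem_filter.mp h3).2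

lemma exists_equiv_of_counts {Λ Λ' : Type} [Fintype Λ] [Fintype Λ'] (a : Λ → ℝ) (a' : Λ' → ℝ)
    (hcard : Fintype.card Λ = Fintype.card Λ') {ε : ℝ}
    (h1 : ∀ t, (Finset.univ.filter fun i => a i ≤ t).card
      ≤ (Finset.univ.filter fun j => a' j ≤ t + ε).card)
    (h2 : ∀ t, (Finset.univ.filter fun j => a' j ≤ t).card
      ≤ (Finset.univ.filter fun i => a i ≤ t + ε).card) :
    ∃ f : Λ ≃ Λ', ∀ i, |a i - a' (f i)| ≤ ε := by
  set n := Fintype.card Λ with hn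
  have e : Fin n ≃ Λ := (Fintype.equivFinOfCardEq rfl).symm
  have e'0 : Fin n ≃ Λ' := (Fintype.equivFinOfCardEq hcard.symm).symm
  set u : Fin n ≃ Λ := (Tuple.sort (a ∘ e)).trans e with hu
  set u' : Fin n ≃ Λ' := (Tuple.sort (a' ∘ e'0)).trans e'0 with hu'
  have hb : Monotone (a ∘ u) := Tuple.monotone_sort (a ∘ e)
  have hb' : Monotone (a' ∘ u') := Tuple.monotone_sort (a' ∘ e'0)
  have hc : ∀ t, (Finset.univ.filter fun k => a (u k) ≤ t).card
      = (Finset.univ.filter fun i => a i ≤ t).card := fun t =>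
    Finset.card_equiv u (fun k => by simp)
  have hc' : ∀ t, (Finset.univ.filter fun k => a' (u' k) ≤ t).card
      = (Finset.univ.filter fun j => a' j ≤ t).card := fun t =>
    Finset.card_equiv u' (fun k => by simp)
  have key : ∀ k : Fin n, |a (u k) - a' (u' k)| ≤ ε := by
    intro k
    have hA : a' (u' k) ≤ a (u k) + ε := by
      refine sorted_le (a ∘ u) (a' ∘ u') hb hb' ε (fun t => ?_) k
      simp only [Function.comp_def]
      rw [hc t, hc' (t + ε)]; exact h1 t
    have hB : a (u k) ≤ a' (u' k) + ε := by
      refine sorted_le (a' ∘ u') (a ∘ u) hb' hb ε (fun t => ?_) k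
      simp only [Function.comp_def]
      rw [hc' t, hc (t + ε)]; exact h2 t
    rw [abs_le]; constructor <;> linarith
  refine ⟨u.symm.trans u', fun i => ?_⟩
  have := key (u.symm i)
  rwa [u.apply_symm_apply] at this

end Comb

/-- for finite direct sums of infinite interval modules `χ_{[a λ, ∞)}`: if the
index sets have different cardinalities the interleaving distance is `∞`; if they have the
same cardinality it equals the minimum over all bijections `f` of `max_λ |a λ - a' (f λ)|`. -/
theorem interleavingDist_infinite_bars {K : Type} [Field K] {Λ Λ' : Type}
    [Fintype Λ] [Fintype Λ'] (a : Λ → ℝ) (a' : Λ' → ℝ) :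
    (Fintype.card Λ ≠ Fintype.card Λ' →
      interleavingDist K (dsum K fun x => chiIci K (a x))
        (dsum K fun y => chiIci K (a' y)) = ⊤) ∧
    (Fintype.card Λ = Fintype.card Λ' →
      interleavingDist K (dsum K fun x => chiIci K (a x))
        (dsum K fun y => chiIci K (a' y))
        = ⨅ f : Λ ≃ Λ', Finset.univ.sup fun x => ENNReal.ofReal |a x - a' (f x)|) := by
  constructor
  · intro hcard
    have hemp : {x : ℝ≥0∞ | ∃ ε : ℝ, 0 ≤ ε ∧
        Interleaved K ε (dsum K fun x => chiIci K (a x)) (dsum K fun y => chiIci K (a' y)) ∧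
        x = ENNReal.ofReal ε} = ∅ := by
      rw [Set.eq_empty_iff_forall_notMem]
      rintro x ⟨ε, hε, hint, rfl⟩
      apply hcard
      obtain ⟨T1, hT1⟩ := Finite.exists_le a
      obtain ⟨T2, hT2⟩ := Finite.exists_le a'
      set T := max T1 T2 with hT
      have hTa : ∀ i, a i ≤ T := fun i => (hT1 i).trans (le_max_left _ _)
      have hTa' : ∀ j, a' j ≤ T := fun j => (hT2 j).trans (le_max_right _ _)
      have e1 : (Finset.univ.filter fun i => a i ≤ T).card = Fintype.card Λ := by
        rw [Finset.filter_true_of_mem (fun i _ => hTa i), Finset.card_univ]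
      have e2 : (Finset.univ.filter fun j => a' j ≤ T).card = Fintype.card Λ' := by
        rw [Finset.filter_true_of_mem (fun j _ => hTa' j), Finset.card_univ]
      have le1 : Fintype.card Λ ≤ Fintype.card Λ' := by
        have := count_le_of_interleaved a a' hint T
        rw [e1] at this
        exact this.trans ((Finset.card_filter_le _ _).trans (le_of_eq Finset.card_univ))
      have le2 : Fintype.card Λ' ≤ Fintype.card Λ := by
        have := count_le_of_interleaved a' a (interleaved_symm hint) T
        rw [e2] at this
        exact this.trans ((Finset.card_filter_le _ _).trans (le_of_eq Finset.card_univ))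
      exact le_antisymm le1 le2
    rw [interleavingDist, hemp, sInf_empty]
  · intro hcard
    apply le_antisymm
    · refine le_iInf fun f => ?_
      set εn : NNReal := Finset.univ.sup fun i => Real.toNNReal |a i - a' (f i)| with hεn
      have hmem : ∀ i, |a i - a' (f i)| ≤ (εn : ℝ) := by
        intro i
        have h1 : Real.toNNReal |a i - a' (f i)| ≤ εn := by
          rw [hεn]
          exact Finset.le_sup (f := fun i => Real.toNNReal |a i - a' (f i)|) (Finset.mem_univ i)
        calc |a i - a' (f i)| = ((Real.toNNReal |a i - a' (f i)|) : ℝ) :=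
              (Real.coe_toNNReal _ (abs_nonneg _)).symm
          _ ≤ (εn : ℝ) := by exact_mod_cast h1
      have hint := isInterleaving_of_equiv (K := K) a a' f (εn : ℝ) εn.2 hmem
      have hle : interleavingDist K (dsum K fun x => chiIci K (a x))
          (dsum K fun y => chiIci K (a' y)) ≤ ENNReal.ofReal (εn : ℝ) :=
        sInf_le ⟨(εn : ℝ), εn.2, hint, rfl⟩
      refine hle.trans (le_of_eq ?_)
      rw [ENNReal.ofReal_coe_nnreal, hεn, ENNReal.coe_finset_sup]
      rfl
    · refine le_sInf fun x hx => ?_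
      obtain ⟨ε, hε, hint, rfl⟩ := hx
      obtain ⟨f, hf⟩ := exists_equiv_of_counts a a' hcard
        (count_le_of_interleaved a a' hint) (count_le_of_interleaved a' a (interleaved_symm hint))
      refine iInf_le_of_le f (Finset.sup_le fun i _ => ?_)
      exact ENNReal.ofReal_le_ofReal (hf i)
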